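/- Let f be a convex function on an interval J containing 0 with f(0) ≤ 0, and A an n×n Hermitian matrix with spectrum in J. Let Φ₁, …, Φ_ℓ be positive linear maps from M_n(ℂ) to M_m(ℂ) and α₁, …, α_ℓ ≥ 0 with 0 ≤ ∑_i α_i Φ_i(I_n) ≤ I_m. Then for each 1 ≤ k ≤ m, the sum of the k largest eigenvalues of f(∑_i α_i Φ_i(A)) is at most the sum of the k largest eigenvalues of ∑_i α_i Φ_i(f(A)). -/

import Mathlib

open Matrix ComplexOrder

noncomputable def matFun {n : ℕ} (f : ℝ → ℝ) (A : Matrix (Fin n) (Fin n) ℂ) :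
    Matrix (Fin n) (Fin n) ℂ :=
  if hA : A.IsHermitian then
    (hA.eigenvectorUnitary : Matrix (Fin n) (Fin n) ℂ) *
      Matrix.diagonal (fun i => (f (hA.eigenvalues i) : ℂ)) *
      (hA.eigenvectorUnitary : Matrix (Fin n) (Fin n) ℂ)ᴴ
  else 0

/-- `lam A j` : the `j`-th largest eigenvalue (0-indexed) of a Hermitian matrix `A`. -/
noncomputable def lam {n : ℕ} (A : Matrix (Fin n) (Fin n) ℂ) (j : ℕ) : ℝ :=
  if hA : A.IsHermitian then
    if h : j < n then (hA.eigenvalues ∘ Tuple.sort hA.eigenvalues) ((⟨j, h⟩ : Fin n).rev)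
    else 0
  else 0

/-- Loewner order. -/
def loewnerLE {n : ℕ} (A B : Matrix (Fin n) (Fin n) ℂ) : Prop := (B - A).PosSemidef

/-- `|B| = (B^* B)^{1/2}`. -/
noncomputable def matAbs {n : ℕ} (B : Matrix (Fin n) (Fin n) ℂ) : Matrix (Fin n) (Fin n) ℂ :=
  (Matrix.posSemidef_conjTranspose_mul_self B).isHermitian.eigenvectorUnitary.1 *
    Matrix.diagonal ((↑) ∘ fun i =>
      Real.sqrt ((Matrix.posSemidef_conjTranspose_mul_self B).isHermitian.eigenvalues i)) *
    (star (Matrix.posSemidef_conjTranspose_mul_self B).isHermitian.eigenvectorUnitary :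
      Matrix (Fin n) (Fin n) ℂ)

/-- `|B|^r` via functional calculus. -/
noncomputable def matAbsPow {n : ℕ} (B : Matrix (Fin n) (Fin n) ℂ) (r : ℝ) :
    Matrix (Fin n) (Fin n) ℂ :=
  matFun (fun t => t ^ r) (matAbs B)

/-!
Put `Ψ = ∑ i, αᵢ • Φᵢ` and diagonalise `Ψ A = U diag(μ) Uᴴ`. For each column `u` of `U`,
`B ↦ ⟪u, Ψ B u⟫` is a positive functional with value `≤ 1` at `1`, so Jensen's inequality for it
(the missing mass is put at `0`, where `f ≤ 0`) gives `f(μ_p) ≤ ⟪u_p, Ψ(f A) u_p⟫`. The `k` largest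
eigenvalues of `f(Ψ A)` are `k` of the values `f(μ_p)`, and by Ky Fan's maximum principle `k`
diagonal entries of `Ψ(f A)` in any orthonormal basis sum to at most its `k` largest eigenvalues.
-/

noncomputable section

open Finset

def Tuple.sortDesc {m : ℕ} (d : Fin m → ℝ) : Equiv.Perm (Fin m) :=
  Fin.revPerm.trans (Tuple.sort d)

theorem Tuple.antitone_comp_sortDesc {m : ℕ} (d : Fin m → ℝ) : Antitone (d ∘ sortDesc d) :=
  fun _ _ hpq => Tuple.monotone_sort d (Fin.rev_le_rev.mpr hpq)

theorem Fin.sum_filter_val_lt {M : Type*} [AddCommMonoid M] {m k : ℕ} (hk : k ≤ m)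
    (g : ℕ → M) : ∑ p ∈ univ.filter (fun p : Fin m => (p : ℕ) < k), g p = ∑ j ∈ range k, g j := by
  rw [sum_filter, Fin.sum_univ_eq_sum_range (fun j => if j < k then g j else 0),
    ← sum_range_add_sum_Ico _ hk, sum_ite_of_true (fun j hj => mem_range.mp hj),
    sum_ite_of_false (fun j hj => not_lt.mpr (mem_Ico.mp hj).1), sum_const_zero, add_zero]

theorem sum_mul_le_sum_filter_val_lt_of_antitone {m k : ℕ} (hk : k ≤ m) {a c : Fin m → ℝ}
    (ha : Antitone a) (hc0 : ∀ p, 0 ≤ c p) (hc1 : ∀ p, c p ≤ 1) (hc : ∑ p, c p = k) :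
    ∑ p, c p * a p ≤ ∑ p ∈ univ.filter (fun p : Fin m => (p : ℕ) < k), a p := by
  set χ : Fin m → ℝ := fun p => if (p : ℕ) < k then 1 else 0
  -- `(c p - χ p) * (a p - t) ≤ 0` for any `t` separating the first `k` values of `a` from the rest
  obtain ⟨t, ht⟩ : ∃ t, ∀ p : Fin m, ((p : ℕ) < k → t ≤ a p) ∧ (k ≤ p → a p ≤ t) := by
    by_cases hkm : k < m
    · exact ⟨a ⟨k, hkm⟩, fun p => ⟨fun hp => ha (Fin.le_def.mpr hp.le), fun hp => ha hp⟩⟩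
    · exact ⟨⨅ p, a p, fun p => ⟨fun _ => ciInf_le (Finite.bddBelow_range a) p,
        fun hp => absurd hp (by omega)⟩⟩
  have hχ : ∑ p, χ p = k := by simp [χ, Fin.card_filter_val_lt, min_eq_right hk]
  have hpair : ∀ p, (c p - χ p) * (a p - t) ≤ 0 := by
    intro p
    by_cases hp : (p : ℕ) < k
    · simp only [χ, if_pos hp]; nlinarith [hc1 p, (ht p).1 hp]
    · simp only [χ, if_neg hp]; nlinarith [hc0 p, (ht p).2 (by omega)]
  have hsum := sum_nonpos fun p (_ : p ∈ univ) => hpair p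
  simp only [sub_mul, mul_sub, sum_sub_distrib, ← sum_mul, hc, hχ] at hsum
  simp only [χ, ite_mul, one_mul, zero_mul] at hsum
  rw [sum_filter]
  linarith

/-- The `j`-th largest value of `d`, counted from `0`; junk value `0` for `j ≥ m`, as in `lam`. -/
def sortedDesc {m : ℕ} (d : Fin m → ℝ) (j : ℕ) : ℝ :=
  if h : j < m then d (Tuple.sortDesc d ⟨j, h⟩) else 0

theorem lam_eq_sortedDesc {n : ℕ} {A : Matrix (Fin n) (Fin n) ℂ} (hA : A.IsHermitian) (j : ℕ) :
    lam A j = sortedDesc hA.eigenvalues j := by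
  rw [lam, dif_pos hA]; rfl

theorem sum_range_sortedDesc {m k : ℕ} (hk : k ≤ m) (d : Fin m → ℝ) :
    ∑ j ∈ range k, sortedDesc d j =
      ∑ p ∈ univ.filter (fun p : Fin m => (p : ℕ) < k), d (Tuple.sortDesc d p) := by
  rw [← Fin.sum_filter_val_lt hk]
  simp [sortedDesc]

theorem exists_card_eq_sum_range_sortedDesc {m k : ℕ} (hk : k ≤ m) (d : Fin m → ℝ) :
    ∃ T : Finset (Fin m), #T = k ∧ ∑ j ∈ range k, sortedDesc d j = ∑ p ∈ T, d p := by
  refine ⟨(univ.filter (fun p : Fin m => (p : ℕ) < k)).map (Tuple.sortDesc d).toEmbedding, ?_, ?_⟩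
  · rw [card_map, Fin.card_filter_val_lt, min_eq_right hk]
  · rw [sum_map, sum_range_sortedDesc hk]; rfl

theorem sum_mul_le_sum_range_sortedDesc {m k : ℕ} (hk : k ≤ m) (d : Fin m → ℝ) {c : Fin m → ℝ}
    (hc0 : ∀ p, 0 ≤ c p) (hc1 : ∀ p, c p ≤ 1) (hc : ∑ p, c p = k) :
    ∑ p, c p * d p ≤ ∑ j ∈ range k, sortedDesc d j := by
  rw [sum_range_sortedDesc hk, ← Equiv.sum_comp (Tuple.sortDesc d)]
  exact sum_mul_le_sum_filter_val_lt_of_antitone hk (Tuple.antitone_comp_sortDesc d)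
    (fun _ => hc0 _) (fun _ => hc1 _) (by rwa [Equiv.sum_comp])

theorem ConvexOn.map_sum_le_of_sum_le_one {E ι : Type*} [AddCommGroup E] [Module ℝ E]
    {J : Set E} {f : E → ℝ} (hf : ConvexOn ℝ J f) (h0 : (0 : E) ∈ J) (hf0 : f 0 ≤ 0)
    {t : Finset ι} {w : ι → ℝ} {x : ι → E} (hw0 : ∀ i ∈ t, 0 ≤ w i) (hw1 : ∑ i ∈ t, w i ≤ 1)
    (hx : ∀ i ∈ t, x i ∈ J) :
    f (∑ i ∈ t, w i • x i) ≤ ∑ i ∈ t, w i • f (x i) := by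
  have h := hf.map_add_sum_le hw0 (sub_add_cancel 1 _) hx (sub_nonneg.mpr hw1) h0
  rw [smul_zero, zero_add, smul_eq_mul] at h
  nlinarith [sub_nonneg.mpr hw1]

namespace Matrix

variable {n m : ℕ} {M : Matrix (Fin m) (Fin m) ℂ}

theorem sum_normSq_row_of_mem_unitaryGroup (hM : M ∈ unitaryGroup (Fin m) ℂ) (q : Fin m) :
    ∑ p, Complex.normSq (M q p) = 1 := by
  have h : (M * Mᴴ) q q = 1 := by
    rw [← star_eq_conjTranspose, Unitary.mul_star_self_of_mem hM, one_apply_eq]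
  simp only [mul_apply, conjTranspose_apply, Complex.star_def, Complex.mul_conj] at h
  exact_mod_cast h

theorem sum_normSq_col_of_mem_unitaryGroup (hM : M ∈ unitaryGroup (Fin m) ℂ) (p : Fin m) :
    ∑ q, Complex.normSq (M q p) = 1 := by
  have h : (Mᴴ * M) p p = 1 := by
    rw [← star_eq_conjTranspose, Unitary.star_mul_self_of_mem hM, one_apply_eq]
  simp only [mul_apply, conjTranspose_apply, Complex.star_def, mul_comm (starRingEnd ℂ _),
    Complex.mul_conj] at h
  exact_mod_cast h

theorem conjTranspose_mul_diagonal_mul_apply_self (d : Fin m → ℝ) (p : Fin m) :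
    (Mᴴ * diagonal (fun q => (d q : ℂ)) * M) p p = ∑ q, (Complex.normSq (M q p) * d q : ℝ) := by
  rw [mul_apply, Complex.ofReal_sum]
  refine sum_congr rfl fun q _ => ?_
  rw [mul_diagonal, conjTranspose_apply, Complex.ofReal_mul, Complex.normSq_eq_conj_mul_self,
    Complex.star_def]
  ring

theorem sum_re_diag_conj_diagonal_le (hM : M ∈ unitaryGroup (Fin m) ℂ) {k : ℕ} (hk : k ≤ m)
    (d : Fin m → ℝ) {T : Finset (Fin m)} (hT : #T = k) :
    ∑ p ∈ T, ((Mᴴ * diagonal (fun q => (d q : ℂ)) * M) p p).re ≤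
      ∑ j ∈ range k, sortedDesc d j := by
  -- the weights `∑ p ∈ T, |M q p|²` lie in `[0, 1]` and sum to `k`: rows and columns of `M` are
  -- unit vectors
  simp only [conjTranspose_mul_diagonal_mul_apply_self, Complex.ofReal_re]
  rw [sum_comm]
  simp only [← sum_mul]
  refine sum_mul_le_sum_range_sortedDesc hk d
    (fun q => sum_nonneg fun p _ => Complex.normSq_nonneg _) (fun q => ?_) ?_
  · calc ∑ p ∈ T, Complex.normSq (M q p) ≤ ∑ p, Complex.normSq (M q p) :=
          sum_le_sum_of_subset_of_nonneg (subset_univ T) fun p _ _ => Complex.normSq_nonneg _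
      _ = 1 := sum_normSq_row_of_mem_unitaryGroup hM q
  · rw [sum_comm, sum_congr rfl fun p _ => sum_normSq_col_of_mem_unitaryGroup hM p]
    simp [hT]

theorem sum_re_diag_conj_le_of_eq_mul_diagonal_mul {U V H : Matrix (Fin m) (Fin m) ℂ}
    (hU : U ∈ unitaryGroup (Fin m) ℂ) (hV : V ∈ unitaryGroup (Fin m) ℂ) {d : Fin m → ℝ}
    (hH : H = U * diagonal (fun q => (d q : ℂ)) * Uᴴ) {k : ℕ} (hk : k ≤ m)
    {T : Finset (Fin m)} (hT : #T = k) :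
    ∑ p ∈ T, ((Vᴴ * H * V) p p).re ≤ ∑ j ∈ range k, sortedDesc d j := by
  have hconj : Vᴴ * H * V = (Uᴴ * V)ᴴ * diagonal (fun q => (d q : ℂ)) * (Uᴴ * V) := by
    rw [hH, conjTranspose_mul, conjTranspose_conjTranspose]
    simp only [Matrix.mul_assoc]
  rw [hconj]
  exact sum_re_diag_conj_diagonal_le (mul_mem (Unitary.star_mem hU) hV) hk d hT

theorem mul_diagonal_mul_conjTranspose_eq_sum (U : Matrix (Fin n) (Fin n) ℂ) (c : Fin n → ℂ) :
    U * diagonal c * Uᴴ = ∑ r, c r • vecMulVec (Uᵀ r) (star (Uᵀ r)) := by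
  ext i j
  rw [mul_apply, sum_apply]
  refine sum_congr rfl fun r _ => ?_
  simp only [mul_diagonal, smul_apply, vecMulVec_apply, conjTranspose_apply, transpose_apply,
    Pi.star_apply, smul_eq_mul]
  ring

theorem isHermitian_mul_diagonal_mul_conjTranspose (U : Matrix (Fin n) (Fin n) ℂ)
    (d : Fin n → ℝ) : (U * diagonal (fun r => (d r : ℂ)) * Uᴴ).IsHermitian :=
  isHermitian_mul_mul_conjTranspose U
    (isHermitian_diagonal_of_self_adjoint _ (funext fun r => Complex.conj_ofReal (d r)))

theorem isHermitian_matFun (f : ℝ → ℝ) (A : Matrix (Fin n) (Fin n) ℂ) :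
    (matFun f A).IsHermitian := by
  unfold matFun
  split_ifs
  · exact isHermitian_mul_diagonal_mul_conjTranspose _ _
  · exact isHermitian_zero

namespace IsHermitian

variable {A : Matrix (Fin n) (Fin n) ℂ}

theorem eq_eigenvectorUnitary_mul_diagonal_mul (hA : A.IsHermitian) :
    A = (hA.eigenvectorUnitary : Matrix (Fin n) (Fin n) ℂ) *
      diagonal (fun r => (hA.eigenvalues r : ℂ)) * (hA.eigenvectorUnitary : Matrix _ _ ℂ)ᴴ := by
  conv_lhs => rw [hA.spectral_theorem]
  rfl

theorem conjTranspose_eigenvectorUnitary_mul_mul (hA : A.IsHermitian) :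
    (hA.eigenvectorUnitary : Matrix (Fin n) (Fin n) ℂ)ᴴ * A * hA.eigenvectorUnitary =
      diagonal (fun r => (hA.eigenvalues r : ℂ)) := by
  have h := hA.conjStarAlgAut_star_eigenvectorUnitary
  rw [Unitary.conjStarAlgAut_star_apply] at h
  rw [← star_eq_conjTranspose, h]
  rfl

theorem eigenvalues_eq_re_diag (hA : A.IsHermitian) (r : Fin n) :
    hA.eigenvalues r =
      (((hA.eigenvectorUnitary : Matrix (Fin n) (Fin n) ℂ)ᴴ * A *
        hA.eigenvectorUnitary) r r).re := by
  simp [hA.conjTranspose_eigenvectorUnitary_mul_mul]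

/-- **Ky Fan's maximum principle**. -/
theorem sum_re_diag_conj_le_sum_lam (hA : A.IsHermitian) {V : Matrix (Fin n) (Fin n) ℂ}
    (hV : V ∈ unitaryGroup (Fin n) ℂ) {k : ℕ} (hk : k ≤ n) {T : Finset (Fin n)} (hT : #T = k) :
    ∑ p ∈ T, ((Vᴴ * A * V) p p).re ≤ ∑ j ∈ range k, lam A j := by
  simp only [lam_eq_sortedDesc hA]
  exact sum_re_diag_conj_le_of_eq_mul_diagonal_mul hA.eigenvectorUnitary.2 hV
    hA.eq_eigenvectorUnitary_mul_diagonal_mul hk hT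

def eigenProj (hA : A.IsHermitian) (r : Fin n) : Matrix (Fin n) (Fin n) ℂ :=
  vecMulVec ((hA.eigenvectorUnitary : Matrix (Fin n) (Fin n) ℂ)ᵀ r)
    (star ((hA.eigenvectorUnitary : Matrix (Fin n) (Fin n) ℂ)ᵀ r))

theorem posSemidef_eigenProj (hA : A.IsHermitian) (r : Fin n) : (hA.eigenProj r).PosSemidef :=
  posSemidef_vecMulVec_self_star _

theorem sum_eigenProj (hA : A.IsHermitian) : ∑ r, hA.eigenProj r = 1 := by
  have h := mul_diagonal_mul_conjTranspose_eq_sum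
    (hA.eigenvectorUnitary : Matrix (Fin n) (Fin n) ℂ) (fun _ => 1)
  rw [diagonal_one, Matrix.mul_one, ← star_eq_conjTranspose,
    Unitary.mul_star_self_of_mem hA.eigenvectorUnitary.2] at h
  simpa [eigenProj] using h.symm

theorem eq_sum_smul_eigenProj (hA : A.IsHermitian) :
    A = ∑ r, (hA.eigenvalues r : ℂ) • hA.eigenProj r := by
  conv_lhs => rw [hA.eq_eigenvectorUnitary_mul_diagonal_mul]
  exact mul_diagonal_mul_conjTranspose_eq_sum _ _

theorem matFun_eq_sum_smul_eigenProj (hA : A.IsHermitian) (f : ℝ → ℝ) :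
    matFun f A = ∑ r, (f (hA.eigenvalues r) : ℂ) • hA.eigenProj r := by
  rw [matFun, dif_pos hA]
  exact mul_diagonal_mul_conjTranspose_eq_sum _ _

theorem isHermitian_map (hA : A.IsHermitian)
    {Ψ : Matrix (Fin n) (Fin n) ℂ →ₗ[ℂ] Matrix (Fin m) (Fin m) ℂ}
    (hΨ : ∀ B, B.PosSemidef → (Ψ B).PosSemidef) : (Ψ A).IsHermitian := by
  rw [hA.eq_sum_smul_eigenProj, map_sum]
  refine isSelfAdjoint_sum _ fun r _ => ?_
  rw [LinearMap.map_smul]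
  exact (hΨ _ (hA.posSemidef_eigenProj r)).isHermitian.smul (Complex.conj_ofReal _)

theorem map_re_le_re_matFun (hA : A.IsHermitian) {J : Set ℝ} {f : ℝ → ℝ} (hf : ConvexOn ℝ J f)
    (h0 : (0 : ℝ) ∈ J) (hf0 : f 0 ≤ 0) (hspec : ∀ r, hA.eigenvalues r ∈ J)
    {φ : Matrix (Fin n) (Fin n) ℂ →ₗ[ℂ] ℂ} (hφ : ∀ B, B.PosSemidef → 0 ≤ φ B) (hφ1 : (φ 1).re ≤ 1) :
    f (φ A).re ≤ (φ (matFun f A)).re := by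
  set w : Fin n → ℝ := fun r => (φ (hA.eigenProj r)).re
  have hre : ∀ c : Fin n → ℝ, (φ (∑ r, (c r : ℂ) • hA.eigenProj r)).re = ∑ r, w r • c r :=
    fun c => by
      simp only [map_sum, LinearMap.map_smul, smul_eq_mul, Complex.re_sum, Complex.re_ofReal_mul,
        w, mul_comm]
  have hw0 : ∀ r ∈ univ, 0 ≤ w r :=
    fun r _ => (Complex.le_def.mp (hφ _ (hA.posSemidef_eigenProj r))).1
  have hw1 : ∑ r, w r ≤ 1 := by
    simpa [w, ← Complex.re_sum, ← map_sum, hA.sum_eigenProj] using hφ1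
  have hφA : (φ A).re = ∑ r, w r • hA.eigenvalues r := by
    conv_lhs => rw [hA.eq_sum_smul_eigenProj]
    exact hre _
  rw [hA.matFun_eq_sum_smul_eigenProj, hre, hφA]
  exact hf.map_sum_le_of_sum_le_one h0 hf0 hw0 hw1 fun r _ => hspec r

theorem map_re_diag_conj_le (hA : A.IsHermitian)
    {Ψ : Matrix (Fin n) (Fin n) ℂ →ₗ[ℂ] Matrix (Fin m) (Fin m) ℂ}
    (hΨ : ∀ B, B.PosSemidef → (Ψ B).PosSemidef) (hΨ1 : loewnerLE (Ψ 1) 1) {J : Set ℝ} {f : ℝ → ℝ}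
    (hf : ConvexOn ℝ J f) (h0 : (0 : ℝ) ∈ J) (hf0 : f 0 ≤ 0) (hspec : ∀ r, hA.eigenvalues r ∈ J)
    {V : Matrix (Fin m) (Fin m) ℂ} (hV : V ∈ unitaryGroup (Fin m) ℂ) (p : Fin m) :
    f ((Vᴴ * Ψ A * V) p p).re ≤ ((Vᴴ * Ψ (matFun f A) * V) p p).re := by
  let φ := entryLinearMap ℂ ℂ p p ∘ₗ LinearMap.mulRight ℂ V ∘ₗ LinearMap.mulLeft ℂ Vᴴ ∘ₗ Ψ
  have hφ : ∀ B, φ B = (Vᴴ * Ψ B * V) p p := fun B => rfl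
  have hφ1 : (φ 1).re ≤ 1 := by
    have h := (Complex.le_def.mp ((hΨ1.conjTranspose_mul_mul_same V).diag_nonneg (i := p))).1
    rw [Matrix.mul_sub, Matrix.sub_mul, Matrix.mul_one, ← star_eq_conjTranspose,
      Unitary.star_mul_self_of_mem hV] at h
    simpa [hφ, star_eq_conjTranspose] using h
  simpa only [hφ] using hA.map_re_le_re_matFun hf h0 hf0 hspec
    (fun B hB => (hΨ B hB).conjTranspose_mul_mul_same V |>.diag_nonneg) hφ1

end IsHermitian

theorem sum_lam_le_of_eq_mul_diagonal_mul {U H : Matrix (Fin m) (Fin m) ℂ}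
    (hU : U ∈ unitaryGroup (Fin m) ℂ) {d : Fin m → ℝ}
    (hHd : H = U * diagonal (fun q => (d q : ℂ)) * Uᴴ) {k : ℕ} (hk : k ≤ m) :
    ∑ j ∈ range k, lam H j ≤ ∑ j ∈ range k, sortedDesc d j := by
  have hH : H.IsHermitian := hHd ▸ isHermitian_mul_diagonal_mul_conjTranspose U d
  obtain ⟨T, hT, hsum⟩ := exists_card_eq_sum_range_sortedDesc hk hH.eigenvalues
  simp only [lam_eq_sortedDesc hH, hsum, hH.eigenvalues_eq_re_diag]
  exact sum_re_diag_conj_le_of_eq_mul_diagonal_mul hU hH.eigenvectorUnitary.2 hHd hk hT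

theorem IsHermitian.sum_lam_matFun_map_le_sum_lam_map_matFun {A : Matrix (Fin n) (Fin n) ℂ}
    (hA : A.IsHermitian) {Ψ : Matrix (Fin n) (Fin n) ℂ →ₗ[ℂ] Matrix (Fin m) (Fin m) ℂ}
    (hΨ : ∀ B, B.PosSemidef → (Ψ B).PosSemidef) (hΨ1 : loewnerLE (Ψ 1) 1) {J : Set ℝ}
    {f : ℝ → ℝ} (hf : ConvexOn ℝ J f) (h0 : (0 : ℝ) ∈ J) (hf0 : f 0 ≤ 0)
    (hspec : ∀ r, hA.eigenvalues r ∈ J) {k : ℕ} (hk : k ≤ m) :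
    ∑ j ∈ range k, lam (matFun f (Ψ A)) j ≤ ∑ j ∈ range k, lam (Ψ (matFun f A)) j := by
  have hX := hA.isHermitian_map hΨ
  set U := (hX.eigenvectorUnitary : Matrix (Fin m) (Fin m) ℂ)
  have hU : U ∈ unitaryGroup (Fin m) ℂ := hX.eigenvectorUnitary.2
  have hfX : matFun f (Ψ A) = U * diagonal (fun q => (f (hX.eigenvalues q) : ℂ)) * Uᴴ := by
    rw [matFun, dif_pos hX]
  obtain ⟨S, hS, hsum⟩ := exists_card_eq_sum_range_sortedDesc hk fun q => f (hX.eigenvalues q)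
  calc ∑ j ∈ range k, lam (matFun f (Ψ A)) j
      ≤ ∑ j ∈ range k, sortedDesc (fun q => f (hX.eigenvalues q)) j :=
        sum_lam_le_of_eq_mul_diagonal_mul hU hfX hk
    _ = ∑ p ∈ S, f (hX.eigenvalues p) := hsum
    _ ≤ ∑ p ∈ S, ((Uᴴ * Ψ (matFun f A) * U) p p).re := sum_le_sum fun p _ => by
        rw [hX.eigenvalues_eq_re_diag]
        exact hA.map_re_diag_conj_le hΨ hΨ1 hf h0 hf0 hspec hU p
    _ ≤ ∑ j ∈ range k, lam (Ψ (matFun f A)) j :=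
        ((isHermitian_matFun f A).isHermitian_map hΨ).sum_re_diag_conj_le_sum_lam hU hk hS

end Matrix

end

theorem weak_majorization_positive_maps_general {n m ℓ : ℕ}
    (A : Matrix (Fin n) (Fin n) ℂ) (hA : A.IsHermitian)
    (J : Set ℝ) (h0 : (0 : ℝ) ∈ J) (f : ℝ → ℝ) (hf : ConvexOn ℝ J f) (hf0 : f 0 ≤ 0)
    (hspec : ∀ i, hA.eigenvalues i ∈ J)
    (Φ : Fin ℓ → (Matrix (Fin n) (Fin n) ℂ →ₗ[ℂ] Matrix (Fin m) (Fin m) ℂ))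
    (hΦpos : ∀ i, ∀ B : Matrix (Fin n) (Fin n) ℂ, B.PosSemidef → (Φ i B).PosSemidef)
    (α : Fin ℓ → ℝ) (hα : ∀ i, 0 ≤ α i)
    (hsum1 : loewnerLE (∑ i, (α i : ℂ) • Φ i 1) 1)
    (k : ℕ) (hkm : k ≤ m) :
    ∑ j ∈ Finset.range k, lam (matFun f (∑ i, (α i : ℂ) • Φ i A)) j ≤
      ∑ j ∈ Finset.range k, lam (∑ i, (α i : ℂ) • Φ i (matFun f A)) j := by
  set Ψ := ∑ i, (α i : ℂ) • Φ i
  have hΨ : ∀ B, Ψ B = ∑ i, (α i : ℂ) • Φ i B := fun B => by simp [Ψ]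
  have hΨpos : ∀ B, B.PosSemidef → (Ψ B).PosSemidef := fun B hB => by
    rw [hΨ]
    exact posSemidef_sum _ fun i _ => (hΦpos i B hB).smul (Complex.zero_le_real.mpr (hα i))
  simp only [← hΨ] at hsum1 ⊢
  exact hA.sum_lam_matFun_map_le_sum_lam_map_matFun hΨpos hsum1 hf h0 hf0 hspec hkm

/-- **Theorem (weak majorization).** For positive linear maps `Φᵢ : Mₙ(ℂ) → Mₘ(ℂ)`,
`αᵢ ≥ 0` with `0 ≤ ∑ αᵢ Φᵢ(Iₙ) ≤ Iₘ`, a Hermitian `A` with spectrum in an interval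
`J ∋ 0` and `f` convex on `J` with `f(0) ≤ 0`:
`∑_{j=1}^k λⱼ(f(∑ αᵢΦᵢ(A))) ≤ ∑_{j=1}^k λⱼ(∑ αᵢΦᵢ(f(A)))` for `1 ≤ k ≤ m`. -/
theorem weak_majorization_positive_maps {n m ℓ : ℕ}
    (A : Matrix (Fin n) (Fin n) ℂ) (hA : A.IsHermitian)
    (J : Set ℝ) (h0 : (0 : ℝ) ∈ J) (f : ℝ → ℝ) (hf : ConvexOn ℝ J f) (hf0 : f 0 ≤ 0)
    (hspec : ∀ i, hA.eigenvalues i ∈ J)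
    (Φ : Fin ℓ → (Matrix (Fin n) (Fin n) ℂ →ₗ[ℂ] Matrix (Fin m) (Fin m) ℂ))
    (hΦpos : ∀ i, ∀ B : Matrix (Fin n) (Fin n) ℂ, B.PosSemidef → (Φ i B).PosSemidef)
    (α : Fin ℓ → ℝ) (hα : ∀ i, 0 ≤ α i)
    (hsum0 : loewnerLE 0 (∑ i, (α i : ℂ) • Φ i 1))
    (hsum1 : loewnerLE (∑ i, (α i : ℂ) • Φ i 1) 1)
    (k : ℕ) (hk1 : 1 ≤ k) (hkm : k ≤ m) :
    ∑ j ∈ Finset.range k, lam (matFun f (∑ i, (α i : ℂ) • Φ i A)) j ≤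
      ∑ j ∈ Finset.range k, lam (∑ i, (α i : ℂ) • Φ i (matFun f A)) j :=
  weak_majorization_positive_maps_general A hA J h0 f hf hf0 hspec Φ hΦpos α hα hsum1 k hkm
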